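/- arXiv:2409.00848 — 5 statements merged into one kernel-verified Lean document; each statement's English description precedes it below -/
import Mathlib

section
/- The normalization constant of the Mallows model equals a product of geometric sums: for any center permutation σ₀ ∈ S_N and any real φ, ∑_{σ ∈ S_N} φ^{K_τ(σ₀, σ)} = ∏_{i=1}^{N} (∑_{j=0}^{i-1} φ^j), where K_τ denotes the Kendall tau distance (number of discordant pairs). -/
def kendallTau {N : ℕ} (σ₁ σ₂ : Equiv.Perm (Fin N)) : ℕ :=
  (Finset.univ.filter fun p : Fin N × Fin N =>
    p.1 < p.2 ∧ ((σ₁ p.1 < σ₁ p.2 ∧ σ₂ p.2 < σ₂ p.1) ∨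
                 (σ₁ p.2 < σ₁ p.1 ∧ σ₂ p.1 < σ₂ p.2))).card

/-- Number of inversions of a permutation. -/
def invCount {n : ℕ} (σ : Equiv.Perm (Fin n)) : ℕ :=
  (Finset.univ.filter fun q : Fin n × Fin n => q.1 < q.2 ∧ σ q.2 < σ q.1).card

/-- Insertion map: `(p, e)` goes to the permutation sending `0 ↦ p` and
`i.succ ↦ p.succAbove (e i)`. -/
def toPerm {n : ℕ} (pe : Fin (n + 1) × Equiv.Perm (Fin n)) : Equiv.Perm (Fin (n + 1)) :=
  (finSuccEquiv n).trans ((pe.2.optionCongr).trans (finSuccEquiv' pe.1).symm)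

lemma toPerm_zero {n : ℕ} (pe : Fin (n + 1) × Equiv.Perm (Fin n)) :
    toPerm pe 0 = pe.1 := by
  simp [toPerm, finSuccEquiv_zero, finSuccEquiv'_symm_none]

lemma toPerm_succ {n : ℕ} (pe : Fin (n + 1) × Equiv.Perm (Fin n)) (i : Fin n) :
    toPerm pe i.succ = pe.1.succAbove (pe.2 i) := by
  simp [toPerm, finSuccEquiv_succ, finSuccEquiv'_symm_some]

lemma toPerm_bijective {n : ℕ} : Function.Bijective (toPerm (n := n)) := by
  rw [Fintype.bijective_iff_injective_and_card]
  constructor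
  · intro a b hab
    have h0 : a.1 = b.1 := by
      rw [← toPerm_zero a, ← toPerm_zero b, hab]
    have h1 : a.2 = b.2 := by
      apply Equiv.ext
      intro i
      have := congrArg (fun σ : Equiv.Perm (Fin (n+1)) => σ i.succ) hab
      simp only [toPerm_succ] at this
      rw [h0] at this
      exact Fin.succAbove_right_injective this
    exact Prod.ext h0 h1
  · simp [Fintype.card_perm, Nat.factorial_succ]

lemma sum_ite_lt {n : ℕ} (p : Fin (n + 1)) :
    (∑ v : Fin n, if (v.castSucc : Fin (n+1)) < p then 1 else 0) = (p : ℕ) := by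
  simp only [Fin.lt_def, Fin.coe_castSucc]
  rw [Fin.sum_univ_eq_sum_range (fun k => if k < (p : ℕ) then 1 else 0)]
  · have hp : (p : ℕ) ≤ n := Nat.lt_succ_iff.mp p.isLt
    rw [← Finset.card_filter]
    have : Finset.filter (fun k => k < (p : ℕ)) (Finset.range n) = Finset.range (p : ℕ) := by
      ext k
      simp only [Finset.mem_filter, Finset.mem_range]
      omega
    rw [this, Finset.card_range]


lemma invCount_toPerm {n : ℕ} (pe : Fin (n + 1) × Equiv.Perm (Fin n)) :
    invCount (toPerm pe) = (pe.1 : ℕ) + invCount pe.2 := by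
  obtain ⟨p, e⟩ := pe
  unfold invCount
  rw [Finset.card_filter, Finset.card_filter, Fintype.sum_prod_type, Fintype.sum_prod_type]
  rw [Fin.sum_univ_succ]
  have h0 : (∑ j : Fin (n+1), if (0 : Fin (n+1)) < j ∧ toPerm (p, e) j < toPerm (p, e) 0
      then 1 else 0) = (p : ℕ) := by
    rw [Fin.sum_univ_succ]
    simp only [lt_self_iff_false, false_and, if_false, zero_add]
    have : ∀ j : Fin n, (if (0 : Fin (n+1)) < j.succ ∧ toPerm (p, e) j.succ < toPerm (p, e) 0
        then 1 else 0) = (if ((e j).castSucc : Fin (n+1)) < p then 1 else 0) := by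
      intro j
      rw [toPerm_succ, toPerm_zero]
      congr 1
      simp only [Fin.succ_pos, true_and]
      rw [eq_iff_iff]
      exact Fin.succAbove_lt_iff_castSucc_lt p (e j)
    rw [Finset.sum_congr rfl (fun j _ => this j)]
    rw [Fintype.sum_equiv e (fun j => if ((e j).castSucc : Fin (n+1)) < p then 1 else 0)
      (fun v => if (v.castSucc : Fin (n+1)) < p then 1 else 0) (fun j => rfl)]
    exact sum_ite_lt p
  rw [h0]
  congr 1
  apply Finset.sum_congr rfl
  intro i _
  rw [Fin.sum_univ_succ]
  simp only [toPerm_succ, toPerm_zero]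
  have hz : (if i.succ < (0 : Fin (n+1)) ∧ p < p.succAbove (e i) then 1 else 0) = 0 := by
    simp [Fin.not_lt_zero]
  rw [hz, zero_add]
  apply Finset.sum_congr rfl
  intro j _
  congr 1
  rw [eq_iff_iff]
  constructor
  · rintro ⟨h1, h2⟩
    exact ⟨Fin.succ_lt_succ_iff.mp h1, Fin.succAbove_lt_succAbove_iff.mp h2⟩
  · rintro ⟨h1, h2⟩
    exact ⟨Fin.succ_lt_succ_iff.mpr h1, Fin.succAbove_lt_succAbove_iff.mpr h2⟩

lemma sum_pow_invCount (φ : ℝ) : ∀ n : ℕ,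
    ∑ σ : Equiv.Perm (Fin n), φ ^ invCount σ =
      ∏ i ∈ Finset.range n, ∑ j ∈ Finset.range (i + 1), φ ^ j := by
  intro n
  induction n with
  | zero =>
    simp only [Finset.range_zero, Finset.prod_empty]
    rw [Fintype.sum_eq_single (1 : Equiv.Perm (Fin 0)) (fun σ hσ => absurd (Subsingleton.elim σ 1) hσ)]
    have : invCount (1 : Equiv.Perm (Fin 0)) = 0 := by
      unfold invCount
      apply Finset.card_eq_zero.mpr
      apply Finset.filter_false_of_mem
      intro q _
      exact fun h => (Fin.elim0 q.1)
    rw [this, pow_zero]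
  | succ n ih =>
    rw [← Fintype.sum_bijective toPerm toPerm_bijective _ (fun σ => φ ^ invCount σ) (fun _ => rfl)]
    rw [Fintype.sum_prod_type]
    simp only [invCount_toPerm, pow_add]
    rw [← Finset.sum_mul_sum]
    rw [ih, Finset.prod_range_succ]
    rw [Fin.sum_univ_eq_sum_range (fun k => φ ^ k)]
    ring

lemma kendallTau_eq_invCount {N : ℕ} (σ₀ σ : Equiv.Perm (Fin N)) :
    kendallTau σ₀ σ = invCount (σ * σ₀⁻¹) := by
  unfold kendallTau invCount
  apply Finset.card_bij'
    (fun q _ => if σ₀ q.1 < σ₀ q.2 then (σ₀ q.1, σ₀ q.2) else (σ₀ q.2, σ₀ q.1))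
    (fun r _ => if σ₀⁻¹ r.1 < σ₀⁻¹ r.2 then (σ₀⁻¹ r.1, σ₀⁻¹ r.2) else (σ₀⁻¹ r.2, σ₀⁻¹ r.1))
  · -- maps into target
    intro q hq
    simp only [Finset.mem_filter, Finset.mem_univ, true_and] at hq ⊢
    obtain ⟨hlt, hd⟩ := hq
    have key : ∀ x : Fin N, (σ * σ₀⁻¹) (σ₀ x) = σ x := by
      intro x; simp [Equiv.Perm.mul_apply]
    by_cases h : σ₀ q.1 < σ₀ q.2
    · rw [if_pos h]
      rcases hd with ⟨_, h2⟩ | ⟨h1, _⟩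
      · exact ⟨h, by rw [key, key]; exact h2⟩
      · exact absurd h (lt_asymm h1)
    · rw [if_neg h]
      rcases hd with ⟨h1, _⟩ | ⟨h1, h2⟩
      · exact absurd h1 h
      · exact ⟨h1, by rw [key, key]; exact h2⟩
  · -- reverse maps into source
    intro r hr
    simp only [Finset.mem_filter, Finset.mem_univ, true_and] at hr ⊢
    obtain ⟨hlt, hinv⟩ := hr
    have key : ∀ x : Fin N, σ (σ₀⁻¹ x) = (σ * σ₀⁻¹) x := by
      intro x; simp [Equiv.Perm.mul_apply]
    have hne : σ₀⁻¹ r.1 ≠ σ₀⁻¹ r.2 := fun h =>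
      absurd (σ₀⁻¹.injective h) (ne_of_lt hlt)
    by_cases h : σ₀⁻¹ r.1 < σ₀⁻¹ r.2
    · rw [if_pos h]
      refine ⟨h, Or.inl ⟨by simp [hlt], ?_⟩⟩
      simp only [key]
      exact hinv
    · rw [if_neg h]
      have h' : σ₀⁻¹ r.2 < σ₀⁻¹ r.1 := (lt_or_gt_of_ne hne).resolve_left h
      refine ⟨h', Or.inr ⟨by simp [hlt], ?_⟩⟩
      simp only [key]
      exact hinv
  · -- left inverse
    intro q hq
    simp only [Finset.mem_filter, Finset.mem_univ, true_and] at hq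
    obtain ⟨hlt, _⟩ := hq
    by_cases h : σ₀ q.1 < σ₀ q.2
    · simp only [if_pos h]
      rw [if_pos (by simpa using hlt)]
      simp
    · simp only [if_neg h]
      rw [if_neg (by simpa using not_lt_of_gt hlt)]
      simp
  · -- right inverse
    intro r hr
    simp only [Finset.mem_filter, Finset.mem_univ, true_and] at hr
    obtain ⟨hlt, _⟩ := hr
    by_cases h : σ₀⁻¹ r.1 < σ₀⁻¹ r.2
    · simp only [if_pos h]
      rw [if_pos (by simpa using hlt)]
      simp
    · simp only [if_neg h]
      rw [if_neg (by simpa using not_lt_of_gt hlt)]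
      simp

theorem mallows_normalization (N : ℕ) (σ₀ : Equiv.Perm (Fin N)) (φ : ℝ) :
    ∑ σ : Equiv.Perm (Fin N), φ ^ kendallTau σ₀ σ =
      ∏ i ∈ Finset.range N, ∑ j ∈ Finset.range (i + 1), φ ^ j := by
  simp only [kendallTau_eq_invCount]
  rw [← sum_pow_invCount φ N]
  exact (Fintype.sum_equiv (Equiv.mulRight σ₀) _ _ (fun τ => by simp)).symm
end

section
/- Under the Mallows model, the position of each element has geometrically decaying tails: if σ ∈ S_N is drawn with probability φ^{K_τ(σ₀,σ)}/Z, then Pr(σ(i) = j) ≤ φ^{|j − σ₀(i)|} for all i, j ∈ [N]. -/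
/-- The Mallows normalization constant. -/
noncomputable def mallowsZ (N : ℕ) (φ : ℝ) (σ₀ : Equiv.Perm (Fin N)) : ℝ :=
  ∑ σ : Equiv.Perm (Fin N), φ ^ kendallTau σ₀ σ

/-- Probability of an event under the Mallows distribution with center `σ₀`. -/
noncomputable def mallowsProb (N : ℕ) (φ : ℝ) (σ₀ : Equiv.Perm (Fin N))
    (E : Equiv.Perm (Fin N) → Prop) [DecidablePred E] : ℝ :=
  (∑ σ ∈ Finset.univ.filter E, φ ^ kendallTau σ₀ σ) / mallowsZ N φ σ₀

/-! Write σ = τ * σ₀. Then `kendallTau σ₀ σ` is the number of inversions of τ and the event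
`σ i = j` becomes `τ a = j` with `a = σ₀ i`. Conjugating τ by the cycles `(a a+1 … N-1)` on
positions and `(j j+1 … N-1)` on values moves the entry `(a, j)` to the corner `(N-1, N-1)`; this
map is injective, keeps the inversions of τ avoiding position `a` and destroys those through `a`.
There are at least `|j - a|` of the latter: `j` values lie below `j` and at most `a` of them sit
left of position `a`, so `j - a` of them sit to its right (and symmetrically when `j < a`).
Hence every term `φ ^ inv τ` of the numerator is at most `φ ^ |j - a|` times a distinct term
of `Z`. -/

open Finset Equiv

def Equiv.Perm.inversions {α : Type*} [LinearOrder α] [Fintype α] (τ : Perm α) :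
    Finset (α × α) :=
  {p | p.1 < p.2 ∧ τ p.2 < τ p.1}

@[simp]
lemma Equiv.Perm.mem_inversions {α : Type*} [LinearOrder α] [Fintype α] {τ : Perm α}
    {p : α × α} : p ∈ τ.inversions ↔ p.1 < p.2 ∧ τ p.2 < τ p.1 := by
  simp [Equiv.Perm.inversions]

lemma kendallTau_mul_right_eq_card_inversions {N : ℕ} (σ₀ τ : Perm (Fin N)) :
    kendallTau σ₀ (τ * σ₀) = #τ.inversions := by
  let sort : Fin N × Fin N → Fin N × Fin N := fun p => if p.1 < p.2 then p else p.swap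
  refine card_nbij' (fun p => sort (σ₀ p.1, σ₀ p.2)) (fun q => sort (σ₀⁻¹ q.1, σ₀⁻¹ q.2))
    ?_ ?_ ?_ ?_ <;>
  · rintro ⟨x, y⟩
    simp only [SetLike.mem_coe, Perm.mem_inversions, Perm.coe_mul, Perm.coe_inv,
      Function.comp_apply, Prod.swap_prod_mk, sort]
    split_ifs <;> grind

lemma natAbs_sub_le_card_add_card {n : ℕ} (τ : Perm (Fin n)) (a : Fin n) :
    ((τ a : ℤ) - a).natAbs ≤ #{q | a < q ∧ τ q < τ a} + #{q | q < a ∧ τ a < τ q} := by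
  have values_below : #{q | τ q < τ a} = (τ a : ℕ) := by
    rw [← Fin.card_Iio (τ a)]
    exact card_equiv τ (by simp)
  have positions_below : #{q | q < a} = (a : ℕ) := by rw [filter_gt_eq_Iio, Fin.card_Iio]
  have split_values : #{q | τ q < τ a} = #{q | q < a ∧ τ q < τ a} + #{q | a < q ∧ τ q < τ a} := by
    rw [← card_union_of_disjoint (disjoint_filter.2 fun q _ h h' => lt_asymm h.1 h'.1)]
    congr 1
    ext q
    simp only [mem_filter, mem_univ, true_and, mem_union]
    grind [τ.injective.eq_iff]
  have split_positions : #{q | q < a} = #{q | q < a ∧ τ q < τ a} + #{q | q < a ∧ τ a < τ q} := by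
    rw [← card_union_of_disjoint (disjoint_filter.2 fun q _ h h' => lt_asymm h.2 h'.2)]
    congr 1
    ext q
    simp only [mem_filter, mem_univ, true_and, mem_union]
    grind [τ.injective.eq_iff]
  omega

variable {n : ℕ}

lemma Fin.cycleIcc_last_last (a : Fin (n + 1)) : Fin.cycleIcc a (Fin.last n) (Fin.last n) = a :=
  Fin.cycleIcc_of_last (Fin.le_last a)

lemma Fin.cycleIcc_last_castSucc (a : Fin (n + 1)) (p : Fin n) :
    Fin.cycleIcc a (Fin.last n) p.castSucc = a.succAbove p := by
  rw [← Fin.succAbove_last, ← Function.comp_apply (f := Fin.cycleIcc a (Fin.last n)),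
    Fin.cycleIcc_comp_succAbove a _ (Fin.le_last a)]

lemma Fin.cycleIcc_last_lt_iff (a : Fin (n + 1)) {x y : Fin (n + 1)} (hx : x ≠ Fin.last n)
    (hy : y ≠ Fin.last n) :
    Fin.cycleIcc a (Fin.last n) x < Fin.cycleIcc a (Fin.last n) y ↔ x < y := by
  obtain ⟨x, rfl⟩ := Fin.exists_castSucc_eq.2 hx
  obtain ⟨y, rfl⟩ := Fin.exists_castSucc_eq.2 hy
  simp only [Fin.cycleIcc_last_castSucc, Fin.succAbove_lt_succAbove_iff,
    Fin.castSucc_lt_castSucc_iff]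

lemma card_add_card_le_card_inversions_through {α : Type*} [LinearOrder α] [Fintype α]
    (τ : Perm α) (a : α) :
    #{q | a < q ∧ τ q < τ a} + #{q | q < a ∧ τ a < τ q} ≤
      #{p ∈ τ.inversions | p.1 = a ∨ p.2 = a} := by
  rw [← card_image_of_injective {q | a < q ∧ τ q < τ a} (Prod.mk_right_injective a),
    ← card_image_of_injective {q | q < a ∧ τ a < τ q} (Prod.mk_left_injective a),
    ← card_union_of_disjoint]
  · refine card_le_card fun p => ?_
    simp only [mem_union, mem_image, mem_filter, mem_univ, true_and, Perm.mem_inversions]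
    grind
  · rw [disjoint_left]
    simp only [mem_image, mem_filter, mem_univ, true_and]
    grind

/-- For `τ a = j`, this fixes `Fin.last n` and keeps the relative order of the other entries. -/
def moveEntryToLast (a j : Fin (n + 1)) (τ : Perm (Fin (n + 1))) : Perm (Fin (n + 1)) :=
  (Fin.cycleIcc j (Fin.last n))⁻¹ * τ * Fin.cycleIcc a (Fin.last n)

lemma card_inversions_moveEntryToLast (τ : Perm (Fin (n + 1))) (a : Fin (n + 1)) :
    #(moveEntryToLast a (τ a) τ).inversions =
      #{p ∈ τ.inversions | ¬(p.1 = a ∨ p.2 = a)} := by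
  set c := Fin.cycleIcc a (Fin.last n)
  set ρ := moveEntryToLast a (τ a) τ
  have c_last : c (Fin.last n) = a := Fin.cycleIcc_last_last a
  have ρ_last : ρ (Fin.last n) = Fin.last n := by
    simp [ρ, moveEntryToLast, Equiv.symm_apply_eq, Fin.cycleIcc_last_last]
  have ρ_lt_iff {x y : Fin (n + 1)} (hx : x ≠ Fin.last n) (hy : y ≠ Fin.last n) :
      ρ x < ρ y ↔ τ (c x) < τ (c y) := by
    rw [← Fin.cycleIcc_last_lt_iff (τ a) (ρ_last ▸ ρ.injective.ne hx)
      (ρ_last ▸ ρ.injective.ne hy)]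
    simp [ρ, moveEntryToLast, c]
  refine card_equiv (c.prodCongr c) fun ⟨x, y⟩ => ?_
  simp only [Perm.mem_inversions, mem_filter, prodCongr_apply, Prod.map,
    ← c_last, c.injective.eq_iff]
  by_cases hx : x = Fin.last n
  · subst hx; simp [(Fin.le_last _).not_gt]
  by_cases hy : y = Fin.last n
  · subst hy; simp [ρ_last, Fin.le_last]
  rw [ρ_lt_iff hy hx, Fin.cycleIcc_last_lt_iff a hx hy]
  tauto

lemma card_inversions_moveEntryToLast_add_natAbs_le (τ : Perm (Fin (n + 1))) (a : Fin (n + 1)) :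
    #(moveEntryToLast a (τ a) τ).inversions +
      ((τ a : ℤ) - a).natAbs ≤ #τ.inversions := by
  rw [card_inversions_moveEntryToLast, ← card_filter_add_card_filter_not (s := τ.inversions)
    (fun p => p.1 = a ∨ p.2 = a)]
  have := natAbs_sub_le_card_add_card τ a
  have := card_add_card_le_card_inversions_through τ a
  omega

lemma sum_pow_card_inversions_filter_apply_le {φ : ℝ} (h0 : 0 ≤ φ) (h1 : φ ≤ 1)
    (a j : Fin (n + 1)) :
    ∑ τ : Perm (Fin (n + 1)) with τ a = j, φ ^ #τ.inversions ≤
      φ ^ ((j : ℤ) - a).natAbs * ∑ τ : Perm (Fin (n + 1)), φ ^ #τ.inversions := by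
  set d := ((j : ℤ) - a).natAbs
  calc ∑ τ : Perm (Fin (n + 1)) with τ a = j, φ ^ #τ.inversions
      ≤ ∑ τ : Perm (Fin (n + 1)) with τ a = j, φ ^ d * φ ^ #(moveEntryToLast a j τ).inversions := by
        refine sum_le_sum fun τ hτ => ?_
        rw [← pow_add]
        refine pow_le_pow_of_le_one h0 h1 ?_
        have := card_inversions_moveEntryToLast_add_natAbs_le τ a
        rw [(mem_filter.1 hτ).2] at this
        exact (add_comm _ _).trans_le this
    _ ≤ ∑ τ : Perm (Fin (n + 1)), φ ^ d * φ ^ #(moveEntryToLast a j τ).inversions :=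
        sum_le_sum_of_subset_of_nonneg (subset_univ _) fun _ _ _ => by positivity
    _ = φ ^ d * ∑ τ : Perm (Fin (n + 1)), φ ^ #τ.inversions := by
        rw [← mul_sum]
        congr 1
        exact Equiv.sum_comp ((Equiv.mulLeft (Fin.cycleIcc j (Fin.last n))⁻¹).trans
          (Equiv.mulRight (Fin.cycleIcc a (Fin.last n)))) fun τ => φ ^ #τ.inversions

theorem mallows_position_geometric_tail (N : ℕ) (φ : ℝ)
    (hφ0 : 0 < φ) (hφ1 : φ < 1) (σ₀ : Equiv.Perm (Fin N)) (i j : Fin N) :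
    mallowsProb N φ σ₀ (fun σ => σ i = j) ≤
      φ ^ (((j : ℤ) - ((σ₀ i : ℕ) : ℤ)).natAbs) := by
  obtain ⟨n, rfl⟩ : ∃ n, N = n + 1 := Nat.exists_eq_add_one.2 i.pos
  have hZ : 0 < mallowsZ (n + 1) φ σ₀ := sum_pos (fun _ _ => pow_pos hφ0 _) univ_nonempty
  rw [mallowsProb, div_le_iff₀ hZ, mallowsZ, sum_filter,
    ← Equiv.sum_comp (Equiv.mulRight σ₀) fun σ => φ ^ kendallTau σ₀ σ,
    ← Equiv.sum_comp (Equiv.mulRight σ₀) fun σ => if σ i = j then φ ^ kendallTau σ₀ σ else 0]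
  simp only [coe_mulRight, Perm.mul_apply, kendallTau_mul_right_eq_card_inversions, ← sum_filter]
  exact sum_pow_card_inversions_filter_apply_le hφ0.le hφ1.le (σ₀ i) j
end

section
/- Under the Mallows model with 0 < φ < 1, the expected positions respect the center ordering: if σ is drawn with probability φ^{K_τ(σ₀,σ)}/Z, then E[σ(i)] > E[σ(j)] if and only if σ₀(i) > σ₀(j). -/
/-- Expected position of element `i` under the Mallows distribution. -/
noncomputable def mallowsExp (N : ℕ) (φ : ℝ) (σ₀ : Equiv.Perm (Fin N)) (i : Fin N) : ℝ :=
  (∑ σ : Equiv.Perm (Fin N), ((σ i : ℕ) : ℝ) * φ ^ kendallTau σ₀ σ) / mallowsZ N φ σ₀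

open Equiv Finset

section Discordant

variable {α : Type*} [Fintype α] [LinearOrder α]

def discordantPairs (σ₀ σ : Perm α) : Finset (α × α) :=
  {p | σ₀ p.1 < σ₀ p.2 ∧ σ p.2 < σ p.1}

lemma mem_discordantPairs {σ₀ σ : Perm α} {p : α × α} :
    p ∈ discordantPairs σ₀ σ ↔ σ₀ p.1 < σ₀ p.2 ∧ σ p.2 < σ p.1 := by
  simp [discordantPairs]

lemma card_discordantPairs_lt_mul_swap {σ₀ σ : Perm α} {i j : α} (h₀ : σ₀ j < σ₀ i)
    (h : σ j < σ i) :
    #(discordantPairs σ₀ σ) < #(discordantPairs σ₀ (σ * swap i j)) := by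
  have hji : (j, i) ∈ discordantPairs σ₀ (σ * swap i j) := by
    simp [mem_discordantPairs, h₀, h]
  -- Send a pair `(a, b)` to `(swap i j a, swap i j b)` unless that breaks its `σ₀`-order; the pair
  -- `(j, i)` is never hit.
  refine (card_le_card_of_injOn (fun p ↦
    if σ₀ (swap i j p.1) < σ₀ (swap i j p.2) then (swap i j p.1, swap i j p.2) else p)
    ?_ ?_).trans_lt (card_erase_lt_of_mem hji)
  · rintro ⟨a, b⟩ hab
    simp only [coe_erase, mem_coe, mem_discordantPairs, Set.mem_sdiff, Set.mem_singleton_iff,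
      Perm.mul_apply] at hab ⊢
    grind
  · rintro ⟨a, b⟩ hab ⟨c, d⟩ hcd
    simp only [mem_coe, mem_discordantPairs] at hab hcd
    grind

end Discordant

lemma kendallTau_eq_card_discordantPairs {N : ℕ} (σ₀ σ : Perm (Fin N)) :
    kendallTau σ₀ σ = #(discordantPairs σ₀ σ) := by
  unfold kendallTau
  refine card_nbij' (fun p ↦ if σ₀ p.1 < σ₀ p.2 then p else p.swap)
    (fun p ↦ if p.1 < p.2 then p else p.swap) ?_ ?_ ?_ ?_ <;>
  · rintro ⟨a, b⟩ hab
    simp only [coe_filter, mem_univ, true_and, Set.mem_ofPred_eq, mem_coe,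
      mem_discordantPairs] at hab ⊢
    grind

lemma kendallTau_lt_mul_swap {N : ℕ} {σ₀ σ : Perm (Fin N)} {i j : Fin N} (h₀ : σ₀ j < σ₀ i)
    (h : σ j < σ i) : kendallTau σ₀ σ < kendallTau σ₀ (σ * swap i j) := by
  simpa only [kendallTau_eq_card_discordantPairs] using card_discordantPairs_lt_mul_swap h₀ h

lemma two_mul_sum_sub_mul_eq {α : Type*} [Fintype α] [DecidableEq α] (x : α → ℝ)
    (w : Perm α → ℝ) (i j : α) :
    2 * ∑ σ : Perm α, (x (σ i) - x (σ j)) * w σ =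
      ∑ σ : Perm α, (x (σ i) - x (σ j)) * (w σ - w (σ * swap i j)) := by
  have hswap : ∑ σ : Perm α, (x (σ i) - x (σ j)) * w σ =
      ∑ σ : Perm α, -((x (σ i) - x (σ j)) * w (σ * swap i j)) :=
    Fintype.sum_equiv (Equiv.mulRight (swap i j)) _ _ fun σ ↦ by
      simp only [coe_mulRight, Perm.coe_mul, Function.comp_apply, swap_apply_left,
        swap_apply_right, mul_swap_mul_self]
      ring
  rw [two_mul]
  nth_rewrite 2 [hswap]
  rw [← sum_add_distrib]
  congr! 1 with σ
  ring

section Mallows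

variable {N : ℕ} {φ : ℝ} (σ₀ : Perm (Fin N))

lemma mallowsZ_pos (hφ : 0 < φ) : 0 < mallowsZ N φ σ₀ :=
  sum_pos (fun _ _ ↦ pow_pos hφ _) univ_nonempty

lemma mallows_swap_term_pos (hφ0 : 0 < φ) (hφ1 : φ < 1) {i j : Fin N} (h₀ : σ₀ j < σ₀ i)
    (σ : Perm (Fin N)) :
    0 < (((σ i : ℕ) : ℝ) - (σ j : ℕ)) *
      (φ ^ kendallTau σ₀ σ - φ ^ kendallTau σ₀ (σ * swap i j)) := by
  have hij : i ≠ j := by rintro rfl; exact h₀.false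
  rcases lt_or_gt_of_ne (σ.injective.ne hij) with h | h
  · have hK := kendallTau_lt_mul_swap (σ := σ * swap i j) h₀ (by simpa using h)
    rw [mul_swap_mul_self] at hK
    refine mul_pos_of_neg_of_neg (by simpa using h) (sub_neg.2 ?_)
    exact pow_lt_pow_right_of_lt_one₀ hφ0 hφ1 hK
  · refine mul_pos (by simpa using h) (sub_pos.2 ?_)
    exact pow_lt_pow_right_of_lt_one₀ hφ0 hφ1 (kendallTau_lt_mul_swap h₀ h)

lemma mallowsExp_lt_of_lt (hφ0 : 0 < φ) (hφ1 : φ < 1) {i j : Fin N} (h₀ : σ₀ j < σ₀ i) :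
    mallowsExp N φ σ₀ j < mallowsExp N φ σ₀ i := by
  unfold mallowsExp
  rw [div_lt_div_iff_of_pos_right (mallowsZ_pos σ₀ hφ0), ← sub_pos, ← sum_sub_distrib]
  have hpos := two_mul_sum_sub_mul_eq (fun k : Fin N ↦ ((k : ℕ) : ℝ))
    (fun σ ↦ φ ^ kendallTau σ₀ σ) i j ▸
      sum_pos (fun σ _ ↦ mallows_swap_term_pos σ₀ hφ0 hφ1 h₀ σ) univ_nonempty
  simp only [← sub_mul]
  linarith

lemma strictMono_mallowsExp_symm (hφ0 : 0 < φ) (hφ1 : φ < 1) :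
    StrictMono fun k ↦ mallowsExp N φ σ₀ (σ₀.symm k) :=
  fun a b hab ↦ mallowsExp_lt_of_lt σ₀ hφ0 hφ1 (by simpa using hab)

end Mallows

theorem mallows_expectation_order (N : ℕ) (φ : ℝ)
    (hφ0 : 0 < φ) (hφ1 : φ < 1) (σ₀ : Equiv.Perm (Fin N)) (i j : Fin N) :
    mallowsExp N φ σ₀ i > mallowsExp N φ σ₀ j ↔ σ₀ j < σ₀ i := by
  simpa using (strictMono_mallowsExp_symm σ₀ hφ0 hφ1).lt_iff_lt (a := σ₀ j) (b := σ₀ i)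
end

section
/- Under the Mallows model, for any pair i < i', the probability that σ ranks σ₀⁻¹(i') before σ₀⁻¹(i) (i.e., σ(σ₀⁻¹(i')) < σ(σ₀⁻¹(i))) is at most φ/(1+φ). -/
/-!
Write `a = σ₀⁻¹ i` and `b = σ₀⁻¹ i'`, so that `σ₀ a < σ₀ b`. Right multiplication by the
transposition `(a b)` maps the event `σ b < σ a` bijectively onto the disjoint event `σ a < σ b`,
and it strictly lowers the Kendall distance to `σ₀`: grouping ordered pairs into orbits of the
induced involution `(p, q) ↦ ((a b) p, (a b) q)`, the number of discordant pairs in each orbit does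
not grow, and the orbit of `(a, b)` loses both of its discordant pairs. Hence the weight of the
event is at most `φ` times that of its mirror image, and its probability is at most `φ / (1 + φ)`.
-/

open Equiv Finset

section Discordant

variable {α : Type*} [LinearOrder α]

def Discordant (τ σ : Perm α) (p q : α) : Prop :=
  (τ p < τ q ∧ σ q < σ p) ∨ (τ q < τ p ∧ σ p < σ q)

instance (τ σ : Perm α) (p q : α) : Decidable (Discordant τ σ p q) := by
  unfold Discordant; infer_instance

theorem discordant_comm {τ σ : Perm α} {p q : α} : Discordant τ σ p q ↔ Discordant τ σ q p :=
  or_comm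

theorem Discordant.ne {τ σ : Perm α} {p q : α} (h : Discordant τ σ p q) : p ≠ q := by
  rintro rfl
  rcases h with ⟨h, -⟩ | ⟨h, -⟩ <;> exact h.false

theorem discordant_mul_swap_add_le {τ σ : Perm α} {a b : α} (hτ : τ a < τ b) (hσ : σ b < σ a)
    (p q : α) :
    (if Discordant τ (σ * swap a b) p q then 1 else 0) +
        (if Discordant τ (σ * swap a b) (swap a b p) (swap a b q) then 1 else 0) ≤
      (if Discordant τ σ p q then 1 else 0) +
        (if Discordant τ σ (swap a b p) (swap a b q) then 1 else 0) := by
  unfold Discordant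
  simp only [Perm.mul_apply, swap_apply_def]
  split_ifs <;> subst_vars <;> grind

theorem discordant_mul_swap_add_lt {τ σ : Perm α} {a b : α} (hτ : τ a < τ b) (hσ : σ b < σ a) :
    (if Discordant τ (σ * swap a b) a b then 1 else 0) +
        (if Discordant τ (σ * swap a b) (swap a b a) (swap a b b) then 1 else 0) <
      (if Discordant τ σ a b then 1 else 0) +
        (if Discordant τ σ (swap a b a) (swap a b b) then 1 else 0) := by
  unfold Discordant
  simp only [Perm.mul_apply, swap_apply_left, swap_apply_right]
  split_ifs <;> grind

end Discordant

section KendallTau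

variable {N : ℕ}

theorem two_mul_kendallTau (τ σ : Perm (Fin N)) :
    2 * kendallTau τ σ = ∑ x : Fin N × Fin N, if Discordant τ σ x.1 x.2 then 1 else 0 := by
  have hK : kendallTau τ σ =
      ∑ x : Fin N × Fin N, if x.1 < x.2 ∧ Discordant τ σ x.1 x.2 then 1 else 0 :=
    card_filter _ _
  have hK' : kendallTau τ σ =
      ∑ x : Fin N × Fin N, if x.2 < x.1 ∧ Discordant τ σ x.1 x.2 then 1 else 0 := by
    rw [hK, ← (Equiv.prodComm _ _).sum_comp]
    simp only [Equiv.prodComm_apply, Prod.fst_swap, Prod.snd_swap, discordant_comm]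
  rw [two_mul]
  nth_rw 1 [hK]
  rw [hK', ← sum_add_distrib]
  refine sum_congr rfl fun x _ => ?_
  by_cases h : Discordant τ σ x.1 x.2
  · rcases h.ne.lt_or_gt with hlt | hlt <;> simp [h, hlt, hlt.not_gt]
  · simp [h]

theorem kendallTau_mul_swap_lt {τ σ : Perm (Fin N)} {a b : Fin N} (hτ : τ a < τ b)
    (hσ : σ b < σ a) : kendallTau τ (σ * swap a b) < kendallTau τ σ := by
  have key := sum_lt_sum (s := univ) (fun x _ => discordant_mul_swap_add_le hτ hσ x.1 x.2)
    ⟨(a, b), mem_univ _, discordant_mul_swap_add_lt hτ hσ⟩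
  have hι (σ' : Perm (Fin N)) : ∑ x : Fin N × Fin N,
      (if Discordant τ σ' (swap a b x.1) (swap a b x.2) then 1 else 0) = 2 * kendallTau τ σ' := by
    rw [two_mul_kendallTau]
    exact (Equiv.prodCongr (swap a b) (swap a b)).sum_comp
      fun x => if Discordant τ σ' x.1 x.2 then 1 else 0
  simp only [sum_add_distrib, hι, ← two_mul_kendallTau] at key
  omega

end KendallTau

theorem sum_div_sum_le_div_one_add {ι : Type*} [Fintype ι] {w : ι → ℝ} (hw : ∀ i, 0 ≤ w i)
    {s t : Finset ι} (hst : Disjoint s t) {φ : ℝ} (hφ : 0 ≤ φ)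
    (h : ∑ i ∈ s, w i ≤ φ * ∑ i ∈ t, w i) :
    (∑ i ∈ s, w i) / ∑ i, w i ≤ φ / (1 + φ) := by
  have hst_le : ∑ i ∈ s, w i + ∑ i ∈ t, w i ≤ ∑ i, w i := by
    classical
    rw [← sum_union hst]
    exact sum_le_sum_of_subset_of_nonneg (subset_univ _) fun i _ _ => hw i
  rcases (sum_nonneg fun i _ => hw i : 0 ≤ ∑ i, w i).eq_or_lt with hZ | hZ
  · rw [← hZ, div_zero]
    positivity
  rw [div_le_div_iff₀ hZ (by positivity)]
  nlinarith

theorem sum_mallows_weight_inverted_le {N : ℕ} {φ : ℝ} (hφ0 : 0 ≤ φ) (hφ1 : φ ≤ 1)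
    {σ₀ : Perm (Fin N)} {a b : Fin N} (hab : σ₀ a < σ₀ b) :
    ∑ σ ∈ univ.filter (fun σ : Perm (Fin N) => σ b < σ a), φ ^ kendallTau σ₀ σ ≤
      φ * ∑ σ ∈ univ.filter (fun σ : Perm (Fin N) => σ a < σ b), φ ^ kendallTau σ₀ σ := by
  rw [mul_sum]
  calc ∑ σ ∈ univ.filter (fun σ : Perm (Fin N) => σ b < σ a), φ ^ kendallTau σ₀ σ
      ≤ ∑ σ ∈ univ.filter (fun σ : Perm (Fin N) => σ b < σ a),
          φ * φ ^ kendallTau σ₀ (σ * swap a b) := by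
        refine sum_le_sum fun σ hσ => ?_
        rw [← pow_succ']
        exact pow_le_pow_of_le_one hφ0 hφ1 (kendallTau_mul_swap_lt hab (mem_filter.1 hσ).2)
    _ = ∑ σ ∈ univ.filter (fun σ : Perm (Fin N) => σ a < σ b), φ * φ ^ kendallTau σ₀ σ :=
        sum_equiv (Equiv.mulRight (swap a b)) (by simp) (by simp)

theorem mallows_inversion_prob_le (N : ℕ) (φ : ℝ)
    (hφ0 : 0 < φ) (hφ1 : φ < 1) (σ₀ : Equiv.Perm (Fin N)) (i i' : Fin N)
    (hii' : i < i') :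
    mallowsProb N φ σ₀ (fun σ => σ (σ₀⁻¹ i') < σ (σ₀⁻¹ i)) ≤ φ / (1 + φ) := by
  have hab : σ₀ (σ₀⁻¹ i) < σ₀ (σ₀⁻¹ i') := by simpa using hii'
  unfold mallowsProb mallowsZ
  refine sum_div_sum_le_div_one_add (fun σ => by positivity) ?_ hφ0.le
    (sum_mallows_weight_inverted_le hφ0.le hφ1.le hab)
  exact disjoint_filter.2 fun σ _ h => h.not_gt
end

section
/- Under the Mallows model, the indicator of a pairwise inversion depends only on the rank gap: for any i₁ > j₁ and i₂ > j₂ with i₁ − j₁ = i₂ − j₂, Pr(σ(σ₀⁻¹(i₁)) > σ(σ₀⁻¹(j₁))) = Pr(σ(σ₀⁻¹(i₂)) > σ(σ₀⁻¹(j₂))). -/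
/-!
Writing `σ = τ * σ₀` turns the Kendall distance to `σ₀` into the inversion number of `τ`, and
the event into `τ j < τ i`. Let `W = [j, i]`, an interval of `d + 1` positions, `d = i - j`.
Every `τ` factors uniquely as `c * π̃`, with `c` increasing on `W` and `π̃` acting on `W` by a
pattern `π ∈ S_{d+1}` and fixing everything else; since `W` is an interval,
`inv (c * π̃) = inv c + inv π`. So the Mallows weight factorizes, the event reads `π 0 < π d`,
and the probability equals the corresponding one in `S_{d+1}`, which depends on `d` only.
-/

open Finset Equiv

theorem Set.OrdConnected.forall_lt_or_forall_gt_of_notMem {α : Type*} [LinearOrder α]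
    {s : Set α} (hs : s.OrdConnected) {y : α} (hy : y ∉ s) :
    (∀ x ∈ s, y < x) ∨ ∀ x ∈ s, x < y := by
  by_contra! h
  obtain ⟨⟨x₁, hx₁, h₁⟩, ⟨x₂, hx₂, h₂⟩⟩ := h
  exact hy (hs.out hx₁ hx₂ ⟨h₁, h₂⟩)

namespace Equiv.Perm

variable {α : Type*} [LinearOrder α]

section Inversions

variable [Fintype α]

def inversions_s13 (τ : Perm α) : Finset (α × α) := {p | p.1 < p.2 ∧ τ p.2 < τ p.1}

def invCount (τ : Perm α) : ℕ := #τ.inversions_s13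

@[simp]
theorem mem_inversions_s13 {τ : Perm α} {p : α × α} :
    p ∈ τ.inversions_s13 ↔ p.1 < p.2 ∧ τ p.2 < τ p.1 :=
  mem_filter_univ _

end Inversions

section Window

variable {m : ℕ} (e : Fin m ↪o α)

theorem viaEmbeddingHom_apply_orderEmbedding (π : Perm (Fin m)) (a : Fin m) :
    viaEmbeddingHom e.toEmbedding π (e a) = e (π a) :=
  viaEmbedding_apply π e.toEmbedding a

theorem viaEmbeddingHom_apply_mem_range_iff (π : Perm (Fin m)) {x : α} :
    viaEmbeddingHom e.toEmbedding π x ∈ Set.range e ↔ x ∈ Set.range e := by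
  by_cases hx : x ∈ Set.range e
  · obtain ⟨a, rfl⟩ := hx
    simp [viaEmbeddingHom_apply_orderEmbedding]
  · rw [viaEmbeddingHom_apply, viaEmbedding_apply_of_notMem _ _ _ hx]

theorem exists_strictMono_mul_viaEmbeddingHom_eq (τ : Perm α) :
    ∃ (c : Perm α) (π : Perm (Fin m)),
      StrictMono (c ∘ e) ∧ c * viaEmbeddingHom e.toEmbedding π = τ := by
  set s := Tuple.sort (τ ∘ e)
  refine ⟨τ * viaEmbeddingHom e.toEmbedding s, s⁻¹, ?_, by rw [map_inv, mul_inv_cancel_right]⟩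
  have h : (τ * viaEmbeddingHom e.toEmbedding s) ∘ e = (τ ∘ e) ∘ s := funext fun a => by
    simp [viaEmbeddingHom_apply_orderEmbedding]
  rw [h]
  exact (Tuple.monotone_sort _).strictMono_of_injective
    ((τ.injective.comp e.injective).comp s.injective)

theorem eq_of_strictMono_mul_viaEmbeddingHom_eq {c₁ c₂ : Perm α} {π₁ π₂ : Perm (Fin m)}
    (hc₁ : StrictMono (c₁ ∘ e)) (hc₂ : StrictMono (c₂ ∘ e))
    (h : c₁ * viaEmbeddingHom e.toEmbedding π₁ = c₂ * viaEmbeddingHom e.toEmbedding π₂) :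
    c₁ = c₂ ∧ π₁ = π₂ := by
  set ρ := π₂ * π₁⁻¹
  have hc : c₁ = c₂ * viaEmbeddingHom e.toEmbedding ρ := by
    rw [map_mul, map_inv, ← mul_assoc, ← h, mul_inv_cancel_right]
  have hcomp : c₁ ∘ e = (c₂ ∘ e) ∘ ρ := funext fun a => by
    simp [hc, viaEmbeddingHom_apply_orderEmbedding]
  have hρ : ρ = 1 := by
    have hfix : c₂ ∘ e = (c₂ ∘ e) ∘ ρ :=
      (hc₂.range_inj (hcomp ▸ hc₁)).1 (ρ.surjective.range_comp _).symm
    ext a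
    exact congrArg Fin.val (hc₂.injective (congrFun hfix a)).symm
  exact ⟨by rw [hc, hρ, map_one, mul_one], (mul_inv_eq_one.1 hρ).symm⟩

open scoped Classical in
theorem sum_eq_sum_strictMono_sum_mul_viaEmbeddingHom [Fintype α] [DecidableEq α]
    {M : Type*} [AddCommMonoid M] (f : Perm α → M) :
    ∑ τ, f τ = ∑ c ∈ ({c | StrictMono (⇑c ∘ e)} : Finset (Perm α)),
      ∑ π, f (c * viaEmbeddingHom e.toEmbedding π) := by
  rw [← sum_product']
  symm
  refine sum_bij (fun x _ => x.1 * viaEmbeddingHom e.toEmbedding x.2) (by simp) ?_ ?_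
    fun _ _ => rfl
  · rintro ⟨c₁, π₁⟩ h₁ ⟨c₂, π₂⟩ h₂ h
    simp only [mem_product, mem_filter_univ, mem_univ, and_true] at h₁ h₂
    obtain ⟨rfl, rfl⟩ := eq_of_strictMono_mul_viaEmbeddingHom_eq e h₁ h₂ h
    rfl
  · intro τ _
    obtain ⟨c, π, hc, rfl⟩ := exists_strictMono_mul_viaEmbeddingHom_eq e τ
    exact ⟨(c, π), by simpa using hc, rfl⟩

variable {e}

theorem viaEmbeddingHom_lt_iff_of_ordConnected (he : (Set.range e).OrdConnected)
    (π : Perm (Fin m)) {x y : α} (hxy : ¬(x ∈ Set.range e ∧ y ∈ Set.range e)) :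
    viaEmbeddingHom e.toEmbedding π x < viaEmbeddingHom e.toEmbedding π y ↔ x < y := by
  have key : ∀ a z, z ∉ Set.range e → (e (π a) < z ↔ e a < z) ∧ (z < e (π a) ↔ z < e a) := by
    intro a z hz
    rcases he.forall_lt_or_forall_gt_of_notMem hz with h | h <;>
      simp only [Set.forall_mem_range] at h
    · exact ⟨iff_of_false (h _).not_gt (h _).not_gt, iff_of_true (h _) (h _)⟩
    · exact ⟨iff_of_true (h _) (h _), iff_of_false (h _).not_gt (h _).not_gt⟩
  by_cases hx : x ∈ Set.range e <;> by_cases hy : y ∈ Set.range e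
  · exact absurd ⟨hx, hy⟩ hxy
  · obtain ⟨a, rfl⟩ := hx
    rw [viaEmbeddingHom_apply_orderEmbedding, viaEmbeddingHom_apply,
      viaEmbedding_apply_of_notMem _ _ _ hy]
    exact (key a y hy).1
  · obtain ⟨b, rfl⟩ := hy
    rw [viaEmbeddingHom_apply_orderEmbedding, viaEmbeddingHom_apply,
      viaEmbedding_apply_of_notMem _ _ _ hx]
    exact (key b x hx).2
  · simp only [viaEmbeddingHom_apply, viaEmbedding_apply_of_notMem _ _ _ hx,
      viaEmbedding_apply_of_notMem _ _ _ hy]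

theorem invCount_mul_viaEmbeddingHom [Fintype α] (he : (Set.range e).OrdConnected)
    {c : Perm α} (hc : StrictMono (c ∘ e)) (π : Perm (Fin m)) :
    (c * viaEmbeddingHom e.toEmbedding π).invCount = c.invCount + π.invCount := by
  classical
  set u := viaEmbeddingHom e.toEmbedding π
  let P : α × α → Prop := fun p => p.1 ∈ Set.range e ∧ p.2 ∈ Set.range e
  have hce : ∀ a b, c (e a) < c (e b) ↔ a < b := fun a b => hc.lt_iff_lt
  have hinside : #{p ∈ (c * u).inversions_s13 | P p} = π.invCount := by
    symm
    refine card_bij (fun q _ => (e q.1, e q.2)) ?_ ?_ ?_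
    · rintro ⟨a, b⟩ h
      rw [mem_inversions_s13] at h
      simp [P, u, viaEmbeddingHom_apply_orderEmbedding, hce, h]
    · rintro ⟨a, b⟩ _ ⟨a', b'⟩ _ h
      simpa using h
    · rintro ⟨x, y⟩ h
      obtain ⟨h, ⟨a, rfl⟩, ⟨b, rfl⟩⟩ := mem_filter.1 h
      refine ⟨(a, b), ?_, rfl⟩
      simpa [u, viaEmbeddingHom_apply_orderEmbedding, hce] using h
  have houtside : #{p ∈ (c * u).inversions_s13 | ¬P p} = #{p ∈ c.inversions_s13 | ¬P p} := by
    refine card_equiv (u.prodCongr u) fun p => ?_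
    have hP : P (u p.1, u p.2) ↔ P p :=
      and_congr (viaEmbeddingHom_apply_mem_range_iff e π)
        (viaEmbeddingHom_apply_mem_range_iff e π)
    simp only [mem_filter, prodCongr_apply, Prod.map, hP, mem_inversions_s13, mul_apply]
    by_cases hnP : P p
    · simp [hnP]
    · simp [hnP, u, viaEmbeddingHom_lt_iff_of_ordConnected he π hnP]
  have hsorted : {p ∈ c.inversions_s13 | P p} = ∅ := by
    refine filter_eq_empty_iff.2 fun p hp hP => ?_
    obtain ⟨⟨a, ha⟩, ⟨b, hb⟩⟩ := hP
    rw [mem_inversions_s13, ← ha, ← hb] at hp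
    exact (hc (e.lt_iff_lt.1 hp.1)).not_gt hp.2
  rw [invCount, invCount, ← card_filter_add_card_filter_not P, hinside, houtside,
    ← card_filter_add_card_filter_not (s := c.inversions_s13) P, hsorted, card_empty, zero_add,
    add_comm]

open scoped Classical in
theorem sum_pow_invCount_mul_eq_of_ordConnected [Fintype α] [DecidableEq α]
    {R : Type*} [CommSemiring R] (he : (Set.range e).OrdConnected) (φ : R)
    (f : Perm α → R) (g : Perm (Fin m) → R)
    (hfg : ∀ c : Perm α, StrictMono (c ∘ e) →
      ∀ π, f (c * viaEmbeddingHom e.toEmbedding π) = g π) :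
    ∑ τ, φ ^ τ.invCount * f τ =
      (∑ c ∈ ({c | StrictMono (⇑c ∘ e)} : Finset (Perm α)), φ ^ c.invCount) *
        ∑ π, φ ^ π.invCount * g π := by
  rw [sum_eq_sum_strictMono_sum_mul_viaEmbeddingHom e, sum_mul]
  refine sum_congr rfl fun c hc => ?_
  have hc : StrictMono (c ∘ e) := (mem_filter_univ c).1 hc
  rw [mul_sum]
  refine sum_congr rfl fun π _ => ?_
  rw [invCount_mul_viaEmbeddingHom he hc, pow_add, hfg c hc, mul_assoc]

end Window

end Equiv.Perm

open Equiv.Perm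

theorem kendallTau_eq_card_discordant {N : ℕ} (σ₁ σ₂ : Perm (Fin N)) :
    kendallTau σ₁ σ₂ = #{p : Fin N × Fin N | σ₁ p.1 < σ₁ p.2 ∧ σ₂ p.2 < σ₂ p.1} := by
  have hdisj : Disjoint (α := Finset (Fin N × Fin N))
      {p | p.1 < p.2 ∧ σ₁ p.1 < σ₁ p.2 ∧ σ₂ p.2 < σ₂ p.1}
      {p | p.1 < p.2 ∧ σ₁ p.2 < σ₁ p.1 ∧ σ₂ p.1 < σ₂ p.2} :=
    disjoint_filter.2 fun p _ h₁ h₂ => h₁.2.1.asymm h₂.2.1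
  have hswap : #{p : Fin N × Fin N | p.1 < p.2 ∧ σ₁ p.2 < σ₁ p.1 ∧ σ₂ p.1 < σ₂ p.2} =
      #{p : Fin N × Fin N | (σ₁ p.1 < σ₁ p.2 ∧ σ₂ p.2 < σ₂ p.1) ∧ ¬ p.1 < p.2} := by
    refine card_equiv (Equiv.prodComm _ _) fun p => ?_
    simp only [mem_filter_univ, prodComm_apply, Prod.fst_swap, Prod.snd_swap]
    constructor
    · rintro ⟨h, h₁, h₂⟩
      exact ⟨⟨h₁, h₂⟩, h.asymm⟩
    · rintro ⟨⟨h₁, h₂⟩, h⟩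
      exact ⟨lt_of_le_of_ne (not_lt.1 h) fun he => h₁.ne (he ▸ rfl), h₁, h₂⟩
  calc kendallTau σ₁ σ₂
      = #{p : Fin N × Fin N | p.1 < p.2 ∧ σ₁ p.1 < σ₁ p.2 ∧ σ₂ p.2 < σ₂ p.1} +
          #{p : Fin N × Fin N | p.1 < p.2 ∧ σ₁ p.2 < σ₁ p.1 ∧ σ₂ p.1 < σ₂ p.2} := by
        rw [← card_union_of_disjoint hdisj, ← filter_or, kendallTau]
        simp_rw [and_or_left]
    _ = #{p : Fin N × Fin N | (σ₁ p.1 < σ₁ p.2 ∧ σ₂ p.2 < σ₂ p.1) ∧ p.1 < p.2} +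
          #{p : Fin N × Fin N | (σ₁ p.1 < σ₁ p.2 ∧ σ₂ p.2 < σ₂ p.1) ∧ ¬ p.1 < p.2} := by
        rw [hswap]
        congr 2 with p
        simp only [mem_filter_univ]
        exact and_comm
    _ = #{p : Fin N × Fin N | σ₁ p.1 < σ₁ p.2 ∧ σ₂ p.2 < σ₂ p.1} := by
        rw [← card_filter_add_card_filter_not (fun p : Fin N × Fin N => p.1 < p.2)
          (s := {p | σ₁ p.1 < σ₁ p.2 ∧ σ₂ p.2 < σ₂ p.1}), filter_filter, filter_filter]

theorem kendallTau_mul_right {N : ℕ} (σ₀ τ : Perm (Fin N)) :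
    kendallTau σ₀ (τ * σ₀) = τ.invCount := by
  rw [kendallTau_eq_card_discordant]
  exact card_equiv (σ₀.prodCongr σ₀) fun p => by
    simp only [mem_filter_univ, prodCongr_apply, Prod.map, mem_inversions_s13]
    rfl

theorem mallowsZ_eq_sum_pow_invCount (N : ℕ) (φ : ℝ) (σ₀ : Perm (Fin N)) :
    mallowsZ N φ σ₀ = ∑ τ : Perm (Fin N), φ ^ τ.invCount :=
  (Fintype.sum_equiv (Equiv.mulRight σ₀) _ _ fun τ => by simp [kendallTau_mul_right]).symm

theorem mallowsProb_eq_sum_pow_invCount (N : ℕ) (φ : ℝ) (σ₀ : Perm (Fin N))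
    (E : Perm (Fin N) → Prop) [DecidablePred E] :
    mallowsProb N φ σ₀ E = (∑ τ : Perm (Fin N) with E (τ * σ₀), φ ^ τ.invCount) /
      ∑ τ : Perm (Fin N), φ ^ τ.invCount := by
  rw [mallowsProb, mallowsZ_eq_sum_pow_invCount, sum_filter, sum_filter]
  congr 1
  exact (Fintype.sum_equiv (Equiv.mulRight σ₀) _ _ fun τ => by simp [kendallTau_mul_right]).symm

theorem mallowsProb_lt_eq_of_ordConnected {N m : ℕ} {φ : ℝ} {σ₀ : Perm (Fin N)}
    (hZ : mallowsZ N φ σ₀ ≠ 0) {e : Fin m ↪o Fin N} (he : (Set.range e).OrdConnected)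
    (a b : Fin m) :
    mallowsProb N φ σ₀ (fun σ => σ (σ₀⁻¹ (e a)) < σ (σ₀⁻¹ (e b))) =
      (∑ π : Perm (Fin m) with π a < π b, φ ^ π.invCount) /
        ∑ π : Perm (Fin m), φ ^ π.invCount := by
  rw [mallowsZ_eq_sum_pow_invCount] at hZ
  rw [mallowsProb_eq_sum_pow_invCount]
  simp only [Perm.coe_inv, Perm.coe_mul, Function.comp_apply, apply_symm_apply]
  have hnum := sum_pow_invCount_mul_eq_of_ordConnected he φ
    (fun τ => if τ (e a) < τ (e b) then 1 else 0) (fun π => if π a < π b then 1 else 0)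
    fun c hc π => by
      simp only [mul_apply, viaEmbeddingHom_apply_orderEmbedding]
      exact if_congr hc.lt_iff_lt rfl rfl
  have hden := sum_pow_invCount_mul_eq_of_ordConnected he φ 1 1 fun _ _ _ => rfl
  simp only [mul_ite, mul_one, mul_zero, Pi.one_apply, ← sum_filter] at hnum hden
  rw [hden] at hZ ⊢
  rw [hnum]
  exact mul_div_mul_left _ _ (left_ne_zero_of_mul hZ)

theorem exists_orderEmbedding_fin_ordConnected {N : ℕ} (j i : Fin N) (d : ℕ)
    (h : (j : ℕ) + d = i) :
    ∃ e : Fin (d + 1) ↪o Fin N, (Set.range e).OrdConnected ∧ e 0 = j ∧ e (Fin.last d) = i := by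
  have hmono : StrictMono fun a : Fin (d + 1) => (⟨j + a, by omega⟩ : Fin N) :=
    fun _ _ hab => Fin.mk_lt_mk.2 (Nat.add_lt_add_left hab _)
  refine ⟨OrderEmbedding.ofStrictMono _ hmono, ⟨?_⟩, Fin.ext (by simp), Fin.ext (by simp [h])⟩
  rintro _ ⟨a, rfl⟩ _ ⟨b, rfl⟩ z ⟨hz₁, hz₂⟩
  simp only [Fin.le_def, OrderEmbedding.coe_ofStrictMono] at hz₁ hz₂
  exact ⟨⟨z - j, by omega⟩, Fin.ext (by simp; omega)⟩

theorem mallows_inversion_prob_depends_only_on_gap_general (N : ℕ) (φ : ℝ)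
    (σ₀ : Equiv.Perm (Fin N))
    (i₁ j₁ i₂ j₂ : Fin N) (h₁ : j₁ < i₁) (h₂ : j₂ < i₂)
    (hgap : (i₁ : ℕ) - (j₁ : ℕ) = (i₂ : ℕ) - (j₂ : ℕ)) :
    mallowsProb N φ σ₀ (fun σ => σ (σ₀⁻¹ j₁) < σ (σ₀⁻¹ i₁)) =
      mallowsProb N φ σ₀ (fun σ => σ (σ₀⁻¹ j₂) < σ (σ₀⁻¹ i₂)) := by
  rcases eq_or_ne (mallowsZ N φ σ₀) 0 with hZ | hZ
  · simp only [mallowsProb, hZ, div_zero]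
  obtain ⟨d, hd₁, hd₂⟩ : ∃ d, (j₁ : ℕ) + d = i₁ ∧ (j₂ : ℕ) + d = i₂ :=
    ⟨i₁ - j₁, by omega, by omega⟩
  obtain ⟨e₁, he₁, rfl, rfl⟩ := exists_orderEmbedding_fin_ordConnected j₁ i₁ d hd₁
  obtain ⟨e₂, he₂, rfl, rfl⟩ := exists_orderEmbedding_fin_ordConnected j₂ i₂ d hd₂
  rw [mallowsProb_lt_eq_of_ordConnected hZ he₁, mallowsProb_lt_eq_of_ordConnected hZ he₂]

theorem mallows_inversion_prob_depends_only_on_gap (N : ℕ) (φ : ℝ)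
    (hφ0 : 0 < φ) (hφ1 : φ < 1) (σ₀ : Equiv.Perm (Fin N))
    (i₁ j₁ i₂ j₂ : Fin N) (h₁ : j₁ < i₁) (h₂ : j₂ < i₂)
    (hgap : (i₁ : ℕ) - (j₁ : ℕ) = (i₂ : ℕ) - (j₂ : ℕ)) :
    mallowsProb N φ σ₀ (fun σ => σ (σ₀⁻¹ j₁) < σ (σ₀⁻¹ i₁)) =
      mallowsProb N φ σ₀ (fun σ => σ (σ₀⁻¹ j₂) < σ (σ₀⁻¹ i₂)) :=
  mallows_inversion_prob_depends_only_on_gap_general N φ σ₀ i₁ j₁ i₂ j₂ h₁ h₂ hgap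
end
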